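/- arXiv:1505.04053 — 3 statements merged into one kernel-verified Lean document; each statement's English description precedes it below -/
import Mathlib

section
/- Let (τ_k)_{k∈K} be a family of 1-Lipschitz functions τ_k : X → ℝ≥0 on a metric space X such that for every x ∈ X, τ̄(x) := Σ_k τ_k(x) ≥ ε > 0, only boundedly many τ_k are nonzero at each point, and each τ_k is bounded by its support diameter. Then each normalized function g_k(x) = τ_k(x)/τ̄(x) is Lipschitz with Lipschitz constant at most C/ε for a constant C depending only on the multiplicity bound and the bound sup τ_k ≤ M. -/
/-!
Writing `S = ∑ᶠ i, τ i`,
`τ k x / S x - τ k y / S y = ((τ k x - τ k y) * S y + τ k y * (S y - S x)) / (S x * S y)`.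
Only the at most `2 * m` indices supported at `x` or at `y` contribute to `S x - S y`, so `S` is
`2 * m`-Lipschitz; together with `τ k y ≤ S y` and `ε ≤ S x` this bounds the quotient by
`(1 + 2 * m) / ε * dist x y`.
-/

open scoped NNReal

open Function

section

variable {α : Type*} [PseudoMetricSpace α]

theorem LipschitzWith.finsum_of_ncard_support_le {ι : Type*} {f : ι → α → ℝ≥0} {K : ℝ≥0}
    {m : ℕ} (hf : ∀ i, LipschitzWith K (f i)) (hfin : ∀ x, (support fun i => f i x).Finite)
    (hcard : ∀ x, (support fun i => f i x).ncard ≤ m) :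
    LipschitzWith (2 * m * K) fun x => ∑ᶠ i, f i x := by
  classical
  refine LipschitzWith.of_dist_le_mul fun x y => ?_
  set A := (hfin x).toFinset ∪ (hfin y).toFinset
  have hcard' : ∀ z, (hfin z).toFinset.card ≤ m := fun z =>
    Set.ncard_eq_toFinset_card _ (hfin z) ▸ hcard z
  have hcardA : (A.card : ℝ) ≤ 2 * m := by
    have := (Finset.card_union_le _ _).trans (add_le_add (hcard' x) (hcard' y))
    exact_mod_cast this.trans_eq (two_mul m).symm
  rw [finsum_eq_sum_of_support_subset _ (s := A) (by simp [A]),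
    finsum_eq_sum_of_support_subset _ (s := A) (by simp [A]), NNReal.dist_eq]
  push_cast
  calc |∑ i ∈ A, (f i x : ℝ) - ∑ i ∈ A, (f i y : ℝ)|
      ≤ ∑ i ∈ A, |(f i x : ℝ) - f i y| := by
        rw [← Finset.sum_sub_distrib]; exact Finset.abs_sum_le_sum_abs _ _
    _ ≤ ∑ _i ∈ A, K * dist x y := Finset.sum_le_sum fun i _ => by
        simpa only [NNReal.dist_eq] using (hf i).dist_le_mul x y
    _ = A.card * (K * dist x y) := by rw [Finset.sum_const, nsmul_eq_mul]
    _ ≤ 2 * m * (K * dist x y) := by gcongr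
    _ = 2 * m * K * dist x y := by ring

theorem LipschitzWith.div_of_le {f g : α → ℝ≥0} {Kf Kg ε : ℝ≥0} (hf : LipschitzWith Kf f)
    (hg : LipschitzWith Kg g) (hfg : ∀ x, f x ≤ g x) (hε : 0 < ε) (hgε : ∀ x, ε ≤ g x) :
    LipschitzWith ((Kf + Kg) / ε) fun x => f x / g x := by
  refine LipschitzWith.of_dist_le_mul fun x y => ?_
  have hfxy : |(f x : ℝ) - f y| ≤ Kf * dist x y := by
    simpa only [NNReal.dist_eq] using hf.dist_le_mul x y
  have hgyx : |(g y : ℝ) - g x| ≤ Kg * dist x y := by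
    simpa only [NNReal.dist_eq, dist_comm y x] using hg.dist_le_mul y x
  have hεgx : (ε : ℝ) ≤ g x := hgε x
  have hgy : (0 : ℝ) < g y := hε.trans_le (hgε y)
  have hfy : (f y : ℝ) ≤ g y := hfg y
  have hεR : (0 : ℝ) < ε := hε
  set d := dist x y
  rw [NNReal.dist_eq, NNReal.coe_div, NNReal.coe_div, NNReal.coe_div, NNReal.coe_add]
  calc |(f x : ℝ) / g x - f y / g y|
      = |((f x : ℝ) - f y) * g y + f y * (g y - g x)| / (g x * g y) := by
        rw [div_sub_div _ _ (hεR.trans_le hεgx).ne' hgy.ne', abs_div,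
          abs_of_pos (mul_pos (hεR.trans_le hεgx) hgy)]
        ring_nf
    _ ≤ (Kf * d * g y + g y * (Kg * d)) / ((g x : ℝ) * g y) := by
        gcongr
        refine (abs_add_le _ _).trans (add_le_add ?_ ?_) <;> rw [abs_mul]
        · rw [abs_of_pos hgy]; exact mul_le_mul_of_nonneg_right hfxy hgy.le
        · rw [abs_of_nonneg (f y).coe_nonneg]
          exact mul_le_mul hfy hgyx (abs_nonneg _) (g y).coe_nonneg
    _ = (Kf + Kg) * d / g x := by field_simp
    _ ≤ (Kf + Kg) / ε * d := by
        rw [div_mul_eq_mul_div]; gcongr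

end

/-- If `(τ k)` are 1-Lipschitz nonnegative functions, at most `m` nonzero at any point,
each bounded by `M`, with pointwise sum at least `ε > 0`, then each normalized function
`g k = τ k / ∑ τ i` is `(C/ε)`-Lipschitz for a constant `C` depending only on `m` and `M`. -/
theorem stmt2 (m : ℕ) (M : ℝ≥0) :
    ∃ C : ℝ≥0, ∀ (X : Type) [MetricSpace X] (K : Type) (τ : K → X → ℝ≥0) (ε : ℝ≥0),
      0 < ε →
      (∀ k, LipschitzWith 1 (τ k)) →
      (∀ x : X, ({k | τ k x ≠ 0} : Set K).Finite ∧ ({k | τ k x ≠ 0} : Set K).ncard ≤ m) →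
      (∀ k x, τ k x ≤ M) →
      (∀ x : X, ε ≤ ∑ᶠ k, τ k x) →
      ∀ k, LipschitzWith (C / ε) (fun x => τ k x / ∑ᶠ i, τ i x) := by
  refine ⟨1 + 2 * m, fun X _ K τ ε hε hlip hmult _ hsum k => ?_⟩
  have hsumLip : LipschitzWith (2 * m * 1) fun x => ∑ᶠ i, τ i x :=
    .finsum_of_ncard_support_le hlip (fun x => (hmult x).1) (fun x => (hmult x).2)
  rw [mul_one] at hsumLip
  exact (hlip k).div_of_le hsumLip
    (fun x => single_le_finsum k (hmult x).1 fun _ => zero_le) hε hsum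
end

section
/- Let Z be a metric space and suppose that for every Lipschitz map f : S^k → Z (k ≤ n) there is a Lipschitz extension to D^{k+1} with constant at most C·Lip(f) (Z is Lipschitz n-connected). Let f₀, f₁ : Δ^m → Z (m ≤ n) be Lipschitz maps with Lip(f_i) ≤ L and sup d(f₀(x), f₁(x)) ≤ L. Given a Lipschitz map P : ∂(Δ^m × [0,1]) → Z that equals f₀ on Δ^m × {0}, equals f₁ on Δ^m × {1}, and has Lip(P) ≤ L' on the sides, there exists a Lipschitz map p : Δ^m × [0,1] → Z extending P with Lip(p) ≤ C'·max(L, L'), where C' depends only on C, m, n. -/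
/-!
Flattening the prism into `ℝ^{m+1}` (forget the last barycentric coordinate, keep the height)
turns it into a compact convex body with nonempty interior whose frontier is the image of
`∂(Δ^m × [0,1])`. Rescaling every ray from an interior point by the gauge of the body is a
bi-Lipschitz homeomorphism onto the closed unit ball carrying that frontier onto `S^m`. So `P`,
transported to `S^m`, is Lipschitz; it extends over `D^{m+1}` by Lipschitz `m`-connectedness, and
the extension pulled back to the prism is `p`. All distortion constants depend on `m` only.
-/

open scoped NNReal Pointwise
open Metric Set Bornology Filter Topology

section GaugeRescale

variable {E : Type*} [NormedAddCommGroup E] [NormedSpace ℝ E]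

theorem norm_smul_sub_smul_le (a b : ℝ) (x y : E) :
    ‖a • x - b • y‖ ≤ |a - b| * ‖x‖ + |b| * ‖x - y‖ := by
  calc ‖a • x - b • y‖ = ‖(a - b) • x + b • (x - y)‖ := by
        rw [sub_smul, smul_sub, sub_add_sub_cancel]
    _ ≤ |a - b| * ‖x‖ + |b| * ‖x - y‖ := by
        simpa only [norm_smul, Real.norm_eq_abs] using norm_add_le ((a - b) • x) (b • (x - y))

theorem norm_le_mul_gauge_of_subset_closedBall {t : Set E} {R : ℝ} (hta : Absorbent ℝ t)
    (hR : 0 < R) (htR : t ⊆ closedBall 0 R) (x : E) : ‖x‖ ≤ R * gauge t x := by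
  rw [← div_le_iff₀' hR]
  exact le_gauge_of_subset_closedBall hta hR.le htR

theorem gauge_le_mul_gauge_of_subset_closedBall {s t : Set E} {Kg R : ℝ≥0}
    (hg : LipschitzWith Kg (gauge s)) (hta : Absorbent ℝ t) (hR : 0 < R)
    (htR : t ⊆ closedBall 0 R) (x : E) : gauge s x ≤ Kg * R * gauge t x := by
  have hgx := hg.dist_le_mul x 0
  rw [gauge_zero, dist_zero_right, dist_zero_right, Real.norm_of_nonneg (gauge_nonneg x)] at hgx
  calc gauge s x ≤ Kg * ‖x‖ := hgx
    _ ≤ Kg * (R * gauge t x) := by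
        grw [norm_le_mul_gauge_of_subset_closedBall hta (NNReal.coe_pos.2 hR) htR x]
    _ = Kg * R * gauge t x := by ring

theorem abs_gauge_div_gauge_sub_mul_norm_le {s t : Set E} {Kg Kh R : ℝ≥0}
    (hg : LipschitzWith Kg (gauge s)) (hh : LipschitzWith Kh (gauge t))
    (hta : Absorbent ℝ t) (hR : 0 < R) (htR : t ⊆ closedBall 0 R) (x y : E) :
    |gauge s x / gauge t x - gauge s y / gauge t y| * ‖x‖
      ≤ R * (Kg + Kg * R * Kh) * ‖x - y‖ := by
  have hnorm := norm_le_mul_gauge_of_subset_closedBall hta (NNReal.coe_pos.2 hR) htR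
  have hgauge := gauge_le_mul_gauge_of_subset_closedBall hg hta hR htR
  set ρ := gauge s y / gauge t y
  rcases eq_or_lt_of_le (gauge_nonneg (s := t) x) with hx | hx
  · have : ‖x‖ = 0 := le_antisymm (by simpa [← hx] using hnorm x) (norm_nonneg x)
    rw [this, mul_zero]; positivity
  have hρ_mul : ρ * gauge t y = gauge s y := by
    rcases eq_or_ne (gauge t y) 0 with hy | hy
    · have := hgauge y
      rw [hy, mul_zero] at this ⊢
      exact (this.antisymm (gauge_nonneg y)).symm
    · exact div_mul_cancel₀ _ hy
  have hsplit : gauge s x / gauge t x - ρ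
      = (gauge s x - gauge s y + ρ * (gauge t y - gauge t x)) / gauge t x := by
    rw [mul_sub, hρ_mul]; field_simp; ring
  have hgxy : |gauge s x - gauge s y| ≤ Kg * ‖x - y‖ := by
    simpa only [dist_eq_norm, Real.norm_eq_abs] using hg.dist_le_mul x y
  have hhxy : |gauge t y - gauge t x| ≤ Kh * ‖x - y‖ := by
    simpa only [dist_eq_norm, Real.norm_eq_abs, norm_sub_rev y x] using hh.dist_le_mul y x
  have hρ : 0 ≤ ρ := div_nonneg (gauge_nonneg y) (gauge_nonneg y)
  calc |gauge s x / gauge t x - ρ| * ‖x‖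
      ≤ (|gauge s x - gauge s y| + ρ * |gauge t y - gauge t x|) / gauge t x
          * (R * gauge t x) := by
        rw [hsplit, abs_div, abs_of_pos hx]
        gcongr
        · exact (abs_add_le _ _).trans_eq (by rw [abs_mul, abs_of_nonneg hρ])
        · exact hnorm x
    _ = R * (|gauge s x - gauge s y| + ρ * |gauge t y - gauge t x|) := by field_simp
    _ ≤ R * (Kg * ‖x - y‖ + Kg * R * (Kh * ‖x - y‖)) := by
        gcongr
        exact div_le_of_le_mul₀ (gauge_nonneg y) (by positivity) (hgauge y)
    _ = R * (Kg + Kg * R * Kh) * ‖x - y‖ := by ring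

theorem lipschitzWith_gaugeRescale {s t : Set E} {Kg Kh R : ℝ≥0}
    (hg : LipschitzWith Kg (gauge s)) (hh : LipschitzWith Kh (gauge t))
    (hta : Absorbent ℝ t) (hR : 0 < R) (htR : t ⊆ closedBall 0 R) :
    LipschitzWith (Kg * R * (2 + R * Kh)) (gaugeRescale s t) := by
  refine LipschitzWith.of_dist_le_mul fun x y => ?_
  have hρy : |gauge s y / gauge t y| ≤ Kg * R :=
    (abs_of_nonneg (div_nonneg (gauge_nonneg y) (gauge_nonneg y))).trans_le <|
      div_le_of_le_mul₀ (gauge_nonneg y) (by positivity)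
        (gauge_le_mul_gauge_of_subset_closedBall hg hta hR htR y)
  rw [dist_eq_norm, dist_eq_norm, gaugeRescale_def, gaugeRescale_def]
  calc _ ≤ _ := norm_smul_sub_smul_le _ _ _ _
    _ ≤ R * (Kg + Kg * R * Kh) * ‖x - y‖ + Kg * R * ‖x - y‖ := by
        grw [abs_gauge_div_gauge_sub_mul_norm_le hg hh hta hR htR x y, hρy]
    _ = ↑(Kg * R * (2 + R * Kh)) * ‖x - y‖ := by push_cast; ring

theorem Convex.exists_lipschitzWith_gaugeRescale {s t : Set E} (hs : Convex ℝ s)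
    (hs₀ : s ∈ 𝓝 0) (ht : Convex ℝ t) (ht₀ : t ∈ 𝓝 0) (htb : IsBounded t) :
    ∃ K, LipschitzWith K (gaugeRescale s t) := by
  obtain ⟨Kg, hg⟩ := hs.lipschitz_gauge hs₀
  obtain ⟨Kh, hh⟩ := ht.lipschitz_gauge ht₀
  obtain ⟨R, hR, htR⟩ := htb.subset_closedBall_lt 0 0
  exact ⟨_, lipschitzWith_gaugeRescale (R := R.toNNReal) hg hh (absorbent_nhds_zero ht₀)
    (Real.toNNReal_pos.2 hR) (by rwa [Real.coe_toNNReal _ hR.le])⟩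

theorem Convex.exists_lipschitz_homeomorph_unitBall {s : Set E} (hc : Convex ℝ s)
    (hne : (interior s).Nonempty) (hb : IsBounded s) :
    ∃ (e : E ≃ₜ E) (K₁ K₂ : ℝ≥0), LipschitzWith K₁ e ∧ LipschitzWith K₂ e.symm ∧
      e '' closure s = closedBall 0 1 ∧ e '' frontier s = sphere 0 1 := by
  obtain ⟨x, hx⟩ := hne
  set s' := -x +ᵥ s
  have hs'c : Convex ℝ s' := hc.vadd _
  have hs'0 : s' ∈ 𝓝 0 := by
    simpa [s', ← mem_interior_iff_mem_nhds, interior_vadd, mem_vadd_set_iff_neg_vadd_mem]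
  have hs'b : IsBounded s' := hb.vadd _
  have hB0 : ball (0 : E) 1 ∈ 𝓝 0 := ball_mem_nhds 0 one_pos
  set h := gaugeRescaleHomeomorph s' (ball 0 1) hs'c hs'0
    (NormedSpace.isVonNBounded_of_isBounded ℝ hs'b) (convex_ball 0 1) hB0
    (NormedSpace.isVonNBounded_ball _ _ _)
  obtain ⟨K₁, hK₁⟩ := hs'c.exists_lipschitzWith_gaugeRescale hs'0 (convex_ball 0 1) hB0
    isBounded_ball
  obtain ⟨K₂, hK₂⟩ := (convex_ball 0 1).exists_lipschitzWith_gaugeRescale hB0 hs'c hs'0 hs'b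
  have himage : ∀ u, (Homeomorph.addLeft (-x)).trans h '' u = h '' (-x +ᵥ u) := fun u => by
    rw [← image_vadd, ← image_comp]; rfl
  have hclosure : (Homeomorph.addLeft (-x)).trans h '' closure s = closedBall 0 1 := by
    rw [himage, ← closure_vadd, image_gaugeRescaleHomeomorph_closure, closure_ball _ one_ne_zero]
  have hinterior : (Homeomorph.addLeft (-x)).trans h '' interior s = ball 0 1 := by
    rw [himage, ← interior_vadd, image_gaugeRescaleHomeomorph_interior, isOpen_ball.interior_eq]
  refine ⟨(Homeomorph.addLeft (-x)).trans h, K₁ * 1, 1 * K₂,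
    hK₁.comp (isometry_add_left (-x)).lipschitz, (isometry_add_left (- -x)).lipschitz.comp hK₂,
    hclosure, ?_⟩
  rw [← closure_sdiff_interior, image_sdiff (Homeomorph.injective _), hclosure, hinterior,
    closedBall_sdiff_ball]

end GaugeRescale

theorem exists_lipschitzOnWith_extension_of_leftInvOn {X Y Z : Type*} [PseudoEMetricSpace X]
    [PseudoEMetricSpace Y] [PseudoEMetricSpace Z] {S A : Set X} {D T : Set Y} {φ : X → Y}
    {ψ : Y → X} {C K₁ K₂ L : ℝ≥0}
    (hext : ∀ (lam : ℝ≥0) (f : Y → Z), LipschitzOnWith lam f T →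
      ∃ F : Y → Z, LipschitzOnWith (C * lam) F D ∧ EqOn F f T)
    (hφ : LipschitzOnWith K₁ φ S) (hφS : MapsTo φ S D) (hφA : MapsTo φ A T)
    (hψ : LipschitzOnWith K₂ ψ T) (hψT : MapsTo ψ T A) (hψφ : LeftInvOn ψ φ A)
    {P : X → Z} (hP : LipschitzOnWith L P A) :
    ∃ p : X → Z, LipschitzOnWith (C * (L * K₂) * K₁) p S ∧ EqOn p P A := by
  obtain ⟨F, hF, hFP⟩ := hext _ (P ∘ ψ) (hP.comp hψ hψT)
  refine ⟨F ∘ φ, hF.comp hφ hφS, fun a ha => ?_⟩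
  simp [hFP (hφA ha), hψφ ha]

local notation "𝔼" m:arg => EuclideanSpace ℝ (Fin (m + 1))

section Prism

variable {m : ℕ}

def euclideanStdSimplex (m : ℕ) : Set (𝔼 m) := {x | (∀ j, 0 ≤ x j) ∧ ∑ j, x j = 1}

def prism (m : ℕ) : Set (𝔼 m × ℝ) := euclideanStdSimplex m ×ˢ Icc 0 1

def prismBoundary (m : ℕ) : Set (𝔼 m × ℝ) :=
  (euclideanStdSimplex m ×ˢ {0, 1}) ∪ ({x | x ∈ euclideanStdSimplex m ∧ ∃ j, x j = 0} ×ˢ Icc 0 1)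

/-- Its trace on the hyperplane `∑ j, x j = 1` is the relative interior of the prism. -/
def positiveCell (m : ℕ) : Set (𝔼 m × ℝ) := {x | ∀ j, 0 < x j} ×ˢ Ioo 0 1

theorem convex_euclideanStdSimplex : Convex ℝ (euclideanStdSimplex m) :=
  (convex_stdSimplex ℝ (Fin (m + 1))).linear_preimage
    (WithLp.linearEquiv 2 ℝ (Fin (m + 1) → ℝ)).toLinearMap

theorem isCompact_euclideanStdSimplex : IsCompact (euclideanStdSimplex m) :=
  (PiLp.homeomorph 2 fun _ : Fin (m + 1) => ℝ).isCompact_preimage.2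
    (isCompact_stdSimplex ℝ (Fin (m + 1)))

theorem convex_prism : Convex ℝ (prism m) := convex_euclideanStdSimplex.prod (convex_Icc 0 1)

theorem isCompact_prism : IsCompact (prism m) := isCompact_euclideanStdSimplex.prod isCompact_Icc

theorem isOpen_positiveCell : IsOpen (positiveCell m) := by
  refine IsOpen.prod ?_ isOpen_Ioo
  simp only [ofPred_forall]
  exact isOpen_iInter_of_finite fun j => isOpen_lt continuous_const (PiLp.continuous_apply 2 _ j)

theorem prismBoundary_subset_prism : prismBoundary m ⊆ prism m := by
  rintro ⟨x, t⟩ (⟨hx, ht⟩ | ⟨⟨hx, -⟩, ht⟩)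
  · rcases ht with rfl | rfl <;> exact ⟨hx, by norm_num⟩
  · exact ⟨hx, ht⟩

theorem mem_prismBoundary_of_notMem_positiveCell {q : 𝔼 m × ℝ} (hq : q ∈ prism m)
    (hq' : q ∉ positiveCell m) : q ∈ prismBoundary m := by
  obtain ⟨x, t⟩ := q
  obtain ⟨hx, ht₀, ht₁⟩ := hq
  by_cases hpos : ∀ j, 0 < x j
  · have : t = 0 ∨ t = 1 := by
      by_contra! h
      exact hq' ⟨hpos, lt_of_le_of_ne ht₀ (Ne.symm h.1), lt_of_le_of_ne ht₁ h.2⟩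
    exact Or.inl ⟨hx, this⟩
  · simp only [not_forall, not_lt] at hpos
    obtain ⟨j, hj⟩ := hpos
    exact Or.inr ⟨⟨hx, j, le_antisymm hj (hx.1 j)⟩, ht₀, ht₁⟩

theorem add_smul_sub_notMem_prism {q c : 𝔼 m × ℝ} {ε : ℝ} (hq : q ∈ prismBoundary m)
    (hc : c ∈ positiveCell m) (hε : 0 < ε) : q + ε • (q - c) ∉ prism m := by
  obtain ⟨x, t⟩ := q
  obtain ⟨a, s⟩ := c
  obtain ⟨ha, hs₀, hs₁⟩ : (∀ j, 0 < a j) ∧ 0 < s ∧ s < 1 := hc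
  rintro ⟨hx', ht₀', ht₁'⟩
  simp only [Prod.fst_add, Prod.snd_add, Prod.smul_mk, Prod.mk_sub_mk, smul_eq_mul]
    at hx' ht₀' ht₁'
  rcases hq with ⟨-, rfl | rfl⟩ | ⟨⟨-, j, hj⟩, -⟩
  · nlinarith
  · nlinarith
  · have := hx'.1 j
    simp only [PiLp.add_apply, PiLp.smul_apply, PiLp.sub_apply, smul_eq_mul] at this
    nlinarith [ha j]

theorem exists_mem_positiveCell_sum_eq_one : ∃ c ∈ positiveCell m, ∑ j, c.1 j = 1 := by
  refine ⟨(WithLp.toLp 2 fun _ => ((m : ℝ) + 1)⁻¹, 1 / 2), ⟨fun j => ?_, ?_⟩, ?_⟩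
  · exact inv_pos.2 (by positivity)
  · norm_num
  · simp only [Finset.sum_const, Finset.card_univ, Fintype.card_fin, nsmul_eq_mul, Nat.cast_add,
      Nat.cast_one]
    field_simp

/-- Replaces the last barycentric coordinate by the height; on the hyperplane `∑ j, x j = 1` it is
inverted by `prismUnchart`. -/
noncomputable def prismChart (m : ℕ) : 𝔼 m × ℝ →L[ℝ] 𝔼 m :=
  LinearMap.toContinuousLinearMap
    { toFun := fun q => q.1 + EuclideanSpace.single (Fin.last m) (q.2 - q.1 (Fin.last m))
      map_add' := fun p q => by
        ext j; simp only [Prod.fst_add, Prod.snd_add, PiLp.add_apply, PiLp.single_apply]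
        split_ifs <;> ring
      map_smul' := fun a q => by
        ext j; simp only [Prod.smul_fst, Prod.smul_snd, PiLp.add_apply, PiLp.smul_apply,
          PiLp.single_apply, smul_eq_mul, RingHom.id_apply]
        split_ifs <;> ring }

theorem prismChart_apply (q : 𝔼 m × ℝ) :
    prismChart m q = q.1 + EuclideanSpace.single (Fin.last m) (q.2 - q.1 (Fin.last m)) := rfl

noncomputable def prismUnchartLinear (m : ℕ) : 𝔼 m →L[ℝ] 𝔼 m × ℝ :=
  LinearMap.toContinuousLinearMap
    { toFun := fun y => (y - EuclideanSpace.single (Fin.last m) (∑ j, y j), y (Fin.last m))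
      map_add' := fun y z => by
        ext j
        · simp only [Prod.fst_add, PiLp.add_apply, PiLp.sub_apply, PiLp.single_apply,
            Finset.sum_add_distrib]
          split_ifs <;> ring
        · simp
      map_smul' := fun a y => by
        ext j
        · simp only [Prod.smul_fst, PiLp.smul_apply, PiLp.sub_apply, PiLp.single_apply,
            smul_eq_mul, RingHom.id_apply, ← Finset.mul_sum]
          split_ifs <;> ring
        · simp }

noncomputable def prismUnchart (m : ℕ) (y : 𝔼 m) : 𝔼 m × ℝ :=
  prismUnchartLinear m y + (EuclideanSpace.single (Fin.last m) 1, 0)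

theorem prismUnchart_fst (y : 𝔼 m) :
    (prismUnchart m y).1 = y + EuclideanSpace.single (Fin.last m) (1 - ∑ j, y j) := by
  ext j
  simp only [prismUnchart, prismUnchartLinear, LinearMap.coe_toContinuousLinearMap',
    LinearMap.coe_mk, AddHom.coe_mk, Prod.mk_add_mk, add_zero, PiLp.add_apply, PiLp.sub_apply,
    PiLp.single_apply]
  split_ifs <;> ring

theorem prismUnchart_snd (y : 𝔼 m) : (prismUnchart m y).2 = y (Fin.last m) := by
  simp [prismUnchart, prismUnchartLinear]

theorem lipschitzWith_prismUnchart : LipschitzWith ‖prismUnchartLinear m‖₊ (prismUnchart m) :=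
  LipschitzWith.of_dist_le_mul fun y z => by
    simpa only [prismUnchart, dist_add_right] using (prismUnchartLinear m).lipschitz.dist_le_mul y z

theorem prismChart_prismUnchart (y : 𝔼 m) : prismChart m (prismUnchart m y) = y := by
  ext j
  simp only [prismChart_apply, prismUnchart_fst, prismUnchart_snd, PiLp.add_apply,
    PiLp.single_eq_same, sub_add_cancel_left, neg_sub, PiLp.single_apply]
  split_ifs <;> ring

theorem sum_prismUnchart_fst (y : 𝔼 m) : ∑ j, (prismUnchart m y).1 j = 1 := by
  simp [prismUnchart_fst, Finset.sum_add_distrib, PiLp.single_apply]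

theorem prismUnchart_prismChart {q : 𝔼 m × ℝ} (hq : ∑ j, q.1 j = 1) :
    prismUnchart m (prismChart m q) = q := by
  ext j
  · simp only [prismChart_apply, prismUnchart_fst, PiLp.add_apply, PiLp.single_apply,
      Finset.sum_add_distrib, hq, Finset.sum_ite_eq', Finset.mem_univ, ↓reduceIte,
      sub_add_cancel_left, neg_sub]
    split_ifs <;> ring
  · simp [prismChart_apply, prismUnchart_snd]

noncomputable def prismBody (m : ℕ) : Set (𝔼 m) := prismChart m '' prism m

theorem isCompact_prismBody : IsCompact (prismBody m) :=
  isCompact_prism.image (prismChart m).continuous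

theorem convex_prismBody : Convex ℝ (prismBody m) :=
  convex_prism.linear_image (prismChart m).toLinearMap

theorem mem_prism_of_prismChart_mem_prismBody {q : 𝔼 m × ℝ} (hq : ∑ j, q.1 j = 1)
    (h : prismChart m q ∈ prismBody m) : q ∈ prism m := by
  obtain ⟨q', hq', heq⟩ := h
  rw [← prismUnchart_prismChart hq, ← heq, prismUnchart_prismChart hq'.1.2]
  exact hq'

theorem preimage_positiveCell_subset_interior_prismBody :
    prismUnchart m ⁻¹' positiveCell m ⊆ interior (prismBody m) :=
  interior_maximal
    (fun y hy => ⟨prismUnchart m y,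
      ⟨⟨fun j => (hy.1 j).le, sum_prismUnchart_fst y⟩, hy.2.1.le, hy.2.2.le⟩,
      prismChart_prismUnchart y⟩)
    (isOpen_positiveCell.preimage lipschitzWith_prismUnchart.continuous)

theorem interior_prismBody_nonempty : (interior (prismBody m)).Nonempty := by
  obtain ⟨c, hc, hsum⟩ := exists_mem_positiveCell_sum_eq_one (m := m)
  refine ⟨prismChart m c, preimage_positiveCell_subset_interior_prismBody ?_⟩
  rwa [mem_preimage, prismUnchart_prismChart hsum]

theorem prismChart_mem_frontier_prismBody {q : 𝔼 m × ℝ} (hq : q ∈ prismBoundary m) :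
    prismChart m q ∈ frontier (prismBody m) := by
  have hq' := prismBoundary_subset_prism hq
  refine ⟨subset_closure (mem_image_of_mem _ hq'), fun hint => ?_⟩
  -- Pushing `q` away from a relative interior point `c` violates a face through `q` at once.
  obtain ⟨c, hc, hsum⟩ := exists_mem_positiveCell_sum_eq_one (m := m)
  have hray : Tendsto (fun ε : ℝ => prismChart m (q + ε • (q - c))) (𝓝[>] 0)
      (𝓝 (prismChart m q)) := by
    have : Continuous fun ε : ℝ => prismChart m (q + ε • (q - c)) := by fun_prop
    simpa using (this.tendsto 0).mono_left nhdsWithin_le_nhds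
  obtain ⟨ε, hε_body, hε⟩ :=
    ((hray.eventually (mem_interior_iff_mem_nhds.1 hint)).and self_mem_nhdsWithin).exists
  refine add_smul_sub_notMem_prism hq hc hε (mem_prism_of_prismChart_mem_prismBody ?_ hε_body)
  simp [Finset.sum_add_distrib, ← Finset.mul_sum, Finset.sum_sub_distrib, hq'.1.2, hsum]

theorem prismUnchart_mem_prismBoundary {y : 𝔼 m} (hy : y ∈ frontier (prismBody m)) :
    prismUnchart m y ∈ prismBoundary m := by
  obtain ⟨q, hq, rfl⟩ := isCompact_prismBody.isClosed.frontier_subset hy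
  rw [prismUnchart_prismChart hq.1.2]
  refine mem_prismBoundary_of_notMem_positiveCell hq fun hcell =>
    hy.2 (preimage_positiveCell_subset_interior_prismBody ?_)
  rwa [mem_preimage, prismUnchart_prismChart hq.1.2]

theorem exists_lipschitz_prism_unitBall (m : ℕ) :
    ∃ (φ : 𝔼 m × ℝ → 𝔼 m) (ψ : 𝔼 m → 𝔼 m × ℝ) (K₁ K₂ : ℝ≥0),
      LipschitzWith K₁ φ ∧ MapsTo φ (prism m) (closedBall 0 1) ∧
      MapsTo φ (prismBoundary m) (sphere 0 1) ∧ LipschitzWith K₂ ψ ∧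
      MapsTo ψ (sphere 0 1) (prismBoundary m) ∧ LeftInvOn ψ φ (prismBoundary m) := by
  obtain ⟨e, K₁, K₂, he, he_symm, he_closure, he_frontier⟩ :=
    (convex_prismBody (m := m)).exists_lipschitz_homeomorph_unitBall interior_prismBody_nonempty
      isCompact_prismBody.isBounded
  rw [(isCompact_prismBody (m := m)).isClosed.closure_eq] at he_closure
  refine ⟨e ∘ prismChart m, prismUnchart m ∘ e.symm, _, _, he.comp (prismChart m).lipschitz,
    fun q hq => he_closure ▸ mem_image_of_mem e (mem_image_of_mem _ hq),
    fun q hq => he_frontier ▸ mem_image_of_mem e (prismChart_mem_frontier_prismBody hq),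
    lipschitzWith_prismUnchart.comp he_symm, fun w hw => ?_, fun q hq => ?_⟩
  · obtain ⟨y, hy, rfl⟩ := he_frontier ▸ hw
    simpa using prismUnchart_mem_prismBoundary hy
  · simp [prismUnchart_prismChart (prismBoundary_subset_prism hq).1.2]

end Prism

/-- If `Z` is Lipschitz `n`-connected with constant `C`, `m ≤ n`, `f₀, f₁` are
`L`-Lipschitz maps of the standard `m`-simplex into `Z` at uniform distance at most `L`,
and `P` is an `L'`-Lipschitz map on the boundary of the prism `Δ^m × [0,1]` restricting
to `f₀` and `f₁` on top and bottom, then `P` extends to a `C'·max(L,L')`-Lipschitz map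
on the whole prism, with `C'` depending only on `C`, `m`, `n`. -/
theorem stmt11 (n m : ℕ) (hm : m ≤ n) (C : ℝ≥0) :
    ∃ C' : ℝ≥0, ∀ (Z : Type) (_ : MetricSpace Z),
      (∀ k ≤ n, ∀ (lam : ℝ≥0) (f : EuclideanSpace ℝ (Fin (k + 1)) → Z),
        LipschitzOnWith lam f (Metric.sphere 0 1) →
        ∃ F : EuclideanSpace ℝ (Fin (k + 1)) → Z,
          LipschitzOnWith (C * lam) F (Metric.closedBall 0 1) ∧
          Set.EqOn F f (Metric.sphere 0 1)) →
      ∀ (L L' : ℝ≥0) (f₀ f₁ : EuclideanSpace ℝ (Fin (m + 1)) → Z)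
        (P : EuclideanSpace ℝ (Fin (m + 1)) × ℝ → Z),
        LipschitzOnWith L f₀
          {x : EuclideanSpace ℝ (Fin (m + 1)) | (∀ j, 0 ≤ x j) ∧ ∑ j, x j = 1} →
        LipschitzOnWith L f₁
          {x : EuclideanSpace ℝ (Fin (m + 1)) | (∀ j, 0 ≤ x j) ∧ ∑ j, x j = 1} →
        (∀ x ∈ {x : EuclideanSpace ℝ (Fin (m + 1)) | (∀ j, 0 ≤ x j) ∧ ∑ j, x j = 1},
          dist (f₀ x) (f₁ x) ≤ L) →
        LipschitzOnWith L' P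
          (({x : EuclideanSpace ℝ (Fin (m + 1)) | (∀ j, 0 ≤ x j) ∧ ∑ j, x j = 1} ×ˢ
              ({0, 1} : Set ℝ)) ∪
            ({x : EuclideanSpace ℝ (Fin (m + 1)) |
                ((∀ j, 0 ≤ x j) ∧ ∑ j, x j = 1) ∧ ∃ j, x j = 0} ×ˢ
              Set.Icc (0 : ℝ) 1)) →
        (∀ x ∈ {x : EuclideanSpace ℝ (Fin (m + 1)) | (∀ j, 0 ≤ x j) ∧ ∑ j, x j = 1},
          P (x, 0) = f₀ x ∧ P (x, 1) = f₁ x) →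
        ∃ p : EuclideanSpace ℝ (Fin (m + 1)) × ℝ → Z,
          LipschitzOnWith (C' * max L L') p
            ({x : EuclideanSpace ℝ (Fin (m + 1)) | (∀ j, 0 ≤ x j) ∧ ∑ j, x j = 1} ×ˢ
              Set.Icc (0 : ℝ) 1) ∧
          Set.EqOn p P
            (({x : EuclideanSpace ℝ (Fin (m + 1)) | (∀ j, 0 ≤ x j) ∧ ∑ j, x j = 1} ×ˢ
                ({0, 1} : Set ℝ)) ∪
              ({x : EuclideanSpace ℝ (Fin (m + 1)) |
                  ((∀ j, 0 ≤ x j) ∧ ∑ j, x j = 1) ∧ ∃ j, x j = 0} ×ˢ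
                Set.Icc (0 : ℝ) 1)) := by
  obtain ⟨φ, ψ, K₁, K₂, hφ, hφS, hφA, hψ, hψT, hψφ⟩ := exists_lipschitz_prism_unitBall m
  refine ⟨C * K₂ * K₁, fun Z _ hconn L L' _ _ P _ _ _ hP _ => ?_⟩
  obtain ⟨p, hp, hpP⟩ := exists_lipschitzOnWith_extension_of_leftInvOn (hconn m hm)
    hφ.lipschitzOnWith hφS hφA hψ.lipschitzOnWith hψT hψφ hP
  refine ⟨p, hp.weaken ?_, hpP⟩
  calc C * (L' * K₂) * K₁ = C * K₂ * K₁ * L' := by ring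
    _ ≤ C * K₂ * K₁ * max L L' := by gcongr; exact le_max_right L L'
end

section
/- Let g : Z → Σ ⊆ ℓ²(K) be given by g(z) = Σ_k g_k(z)·e_k where (g_k) is an L-Lipschitz partition of unity with multiplicity at most n+1. Then g is Lipschitz with constant at most √(2(n+1))·L. -/
open scoped NNReal ENNReal
open Finset

/-! Each coordinate of `g z - g w` has size at most `L * d(z, w)` by the Lipschitz bound, and only
the at most `2(n+1)` coordinates in the union of the two supports are nonzero. -/

theorem lp.norm_le_sqrt_card_mul {α : Type*} {E : α → Type*} [∀ i, NormedAddCommGroup (E i)]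
    {f : lp E 2} {s : Finset α} {c : ℝ} (hc : 0 ≤ c) (hfs : ∀ i ∉ s, f i = 0)
    (hfc : ∀ i ∈ s, ‖f i‖ ≤ c) : ‖f‖ ≤ √(#s) * c := by
  have hp : (2 : ℝ≥0∞).toReal = 2 := by norm_num
  refine lp.norm_le_of_tsum_le (by norm_num) (by positivity) ?_
  rw [hp, tsum_eq_sum fun i hi => by simp [hfs i hi]]
  calc ∑ i ∈ s, ‖f i‖ ^ (2 : ℝ) ≤ ∑ _i ∈ s, c ^ 2 :=
        sum_le_sum fun i hi => by
          rw [Real.rpow_two]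
          exact pow_le_pow_left₀ (norm_nonneg _) (hfc i hi) 2
    _ = (√(#s) * c) ^ (2 : ℝ) := by
        rw [sum_const, nsmul_eq_mul, Real.rpow_two, mul_pow, Real.sq_sqrt (Nat.cast_nonneg _)]

theorem stmt15_general {Z K : Type*} [MetricSpace Z] (n : ℕ) (L : ℝ≥0)
    (g : K → Z → ℝ)
    (hlip : ∀ k, LipschitzWith L (g k))
    (hfin : ∀ z : Z, ({k | g k z ≠ 0} : Set K).Finite ∧
      ({k | g k z ≠ 0} : Set K).ncard ≤ n + 1)
    (hmem : ∀ z : Z, Memℓp (fun k => g k z) 2) :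
    LipschitzWith (Real.toNNReal (Real.sqrt (2 * (n + 1))) * L)
      (fun z => (⟨fun k => g k z, hmem z⟩ : lp (fun _ : K => ℝ) 2)) := by
  classical
  refine lipschitzWith_iff_dist_le_mul.2 fun z w => ?_
  set s := (hfin z).1.toFinset ∪ (hfin w).1.toFinset
  have hcard : #s ≤ 2 * (n + 1) := by
    refine (card_union_le _ _).trans ?_
    rw [← Set.ncard_eq_toFinset_card _ (hfin z).1, ← Set.ncard_eq_toFinset_card _ (hfin w).1]
    linarith [(hfin z).2, (hfin w).2]
  set x : lp (fun _ : K => ℝ) 2 := ⟨fun k => g k z, hmem z⟩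
  set y : lp (fun _ : K => ℝ) 2 := ⟨fun k => g k w, hmem w⟩
  have hxy (k : K) : (x - y) k = g k z - g k w := rfl
  have hdiff := lp.norm_le_sqrt_card_mul (f := x - y) (s := s) (c := L * dist z w)
    (by positivity) (fun k hk => by simp_all [s])
    (fun k _ => by simpa [hxy, Real.dist_eq] using (hlip k).dist_le_mul z w)
  rw [dist_eq_norm, NNReal.coe_mul, Real.coe_toNNReal _ (Real.sqrt_nonneg _), mul_assoc]
  refine hdiff.trans (mul_le_mul_of_nonneg_right (Real.sqrt_le_sqrt ?_) (by positivity))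
  exact_mod_cast hcard

/-- If `(g k)` is a partition of unity on `Z` by `L`-Lipschitz functions with at most
`n+1` nonzero at any point, then the map `z ↦ (g k z)_k ∈ ℓ²(K)` is Lipschitz with
constant `√(2(n+1))·L`. -/
theorem stmt15 {Z K : Type*} [MetricSpace Z] (n : ℕ) (L : ℝ≥0)
    (g : K → Z → ℝ) (hnn : ∀ k z, 0 ≤ g k z)
    (hlip : ∀ k, LipschitzWith L (g k))
    (hfin : ∀ z : Z, ({k | g k z ≠ 0} : Set K).Finite ∧
      ({k | g k z ≠ 0} : Set K).ncard ≤ n + 1)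
    (hsum : ∀ z : Z, HasSum (fun k => g k z) 1)
    (hmem : ∀ z : Z, Memℓp (fun k => g k z) 2) :
    LipschitzWith (Real.toNNReal (Real.sqrt (2 * (n + 1))) * L)
      (fun z => (⟨fun k => g k z, hmem z⟩ : lp (fun _ : K => ℝ) 2)) :=
  stmt15_general n L g hlip hfin hmem
end
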